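/- For odd d > 0, the matrix -S⁻₀ = [[1,d],[0,-1]] is the unique nontrivial isometry of the lattice with Gram matrix [[2,d],[d,-2]] that preserves the cone C⁺_d = {(x,y) ∈ ℝ² : dx - 2y > 0 and dx + (d²+2)y > 0}; hence the group of cone-preserving isometries is ℤ/2. -/
import Mathlib


open Matrix

/-- The Kähler cone of X_d: {(x,y) ∈ ℝ² : dx - 2y > 0 and dx + (d²+2)y > 0}. -/
def kaehlerConeXd (d : ℤ) : Set (Fin 2 → ℝ) :=
  {v | (d : ℝ) * v 0 - 2 * v 1 > 0 ∧ (d : ℝ) * v 0 + ((d : ℝ)^2 + 2) * v 1 > 0}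

private lemma nonneg_aux (F X : ℝ) (h : ∀ t : ℝ, 0 < t → 0 < F + t * X) : 0 ≤ F := by
  by_contra hF
  push_neg at hF
  have hden : (0:ℝ) < 1 + X^2 := by positivity
  have ht : 0 < -F / (1 + X^2) := div_pos (by linarith) hden
  have h2 := h _ ht
  have h3 : (1 + X^2) * (F + -F / (1 + X^2) * X) = F * (1 + X^2 - X) := by
    field_simp; ring
  have h4 : 0 < F * (1 + X^2 - X) := by
    rw [← h3]; exact mul_pos hden h2
  have h5 : 0 < 1 + X^2 - X := by nlinarith [sq_nonneg (X - 1/2)]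
  nlinarith [mul_pos_of_neg_of_neg hF (show -(1 + X^2 - X) < 0 by linarith)]

private lemma cone_main (m K F1 G1 F2 G2 : ℝ) (hm : 0 < m) (hK : 0 < K)
    (h1 : 0 ≤ F1) (h2 : 0 ≤ G1) (h3 : 0 ≤ F2) (h4 : 0 ≤ G2)
    (e1 : G1^2 + m*G1*F1 + F1^2 = K^2)
    (e2 : G2^2 + m*G2*F2 + F2^2 = K^2)
    (e3 : 2*G1*G2 + m*(G1*F2 + F1*G2) + 2*F1*F2 = m*K^2)
    (e4 : G1*F2 - G2*F1 = K^2) :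
    F1 = 0 ∧ G1 = K ∧ F2 = K ∧ G2 = 0 := by
  have hsum : G1*G2 + m*(G2*F1) + F1*F2 = 0 := by linear_combination e3/2 - (m/2)*e4
  have n1 : 0 ≤ G1*G2 := mul_nonneg h2 h4
  have n2 : 0 ≤ m*(G2*F1) := mul_nonneg hm.le (mul_nonneg h4 h1)
  have n3 : 0 ≤ F1*F2 := mul_nonneg h1 h3
  have hGG : G1*G2 = 0 := le_antisymm (by linarith) n1
  have hGF : G2*F1 = 0 := by
    have : m*(G2*F1) = 0 := le_antisymm (by linarith) n2
    rcases mul_eq_zero.mp this with h | h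
    · exact absurd h (ne_of_gt hm)
    · exact h
  have hFF : F1*F2 = 0 := by linarith
  have hG1F2 : G1*F2 = K^2 := by linarith [e4]
  have hF1z : F1 = 0 := by
    rcases mul_eq_zero.mp hFF with h | h
    · exact h
    · exfalso; rw [h, mul_zero] at hG1F2; nlinarith
  have hG2z : G2 = 0 := by
    rcases mul_eq_zero.mp hGG with h | h
    · exfalso; rw [h, zero_mul] at hG1F2; nlinarith
    · exact h
  have hG1K : G1 = K := by
    have hfac : (G1 - K)*(G1 + K) = 0 := by
      linear_combination e1 + (-m*G1 - F1)*hF1z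
    rcases mul_eq_zero.mp hfac with h | h
    · linarith
    · exfalso; nlinarith
  have hF2K : F2 = K := by
    have hfac : (F2 - K)*(F2 + K) = 0 := by
      linear_combination e2 + (-m*F2 - G2)*hG2z
    rcases mul_eq_zero.mp hfac with h | h
    · linarith
    · exfalso; nlinarith
  exact ⟨hF1z, hG1K, hF2K, hG2z⟩

set_option maxHeartbeats 2000000

/-- For odd d > 0, the matrix -S⁻₀ = [[1,d],[0,-1]] is the unique nontrivial isometry
of the lattice [[2,d],[d,-2]] preserving the cone C⁺_d; hence the group of
cone-preserving isometries is ℤ/2 (the matrix is an involution). -/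
theorem stmt_12 (d : ℤ) (hd : Odd d) (hpos : 0 < d) :
    (∀ M : Matrix (Fin 2) (Fin 2) ℤ, IsUnit M.det →
      Mᵀ * !![2, d; d, -2] * M = !![2, d; d, -2] →
      (∀ v ∈ kaehlerConeXd d, (M.map (Int.cast : ℤ → ℝ)).mulVec v ∈ kaehlerConeXd d) →
      M = 1 ∨ M = !![1, d; 0, -1]) ∧
    (IsUnit (!![1, d; 0, -1] : Matrix (Fin 2) (Fin 2) ℤ).det ∧
      (!![1, d; 0, -1] : Matrix (Fin 2) (Fin 2) ℤ)ᵀ * !![2, d; d, -2] * !![1, d; 0, -1]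
        = !![2, d; d, -2] ∧
      (∀ v ∈ kaehlerConeXd d,
        ((!![1, d; 0, -1] : Matrix (Fin 2) (Fin 2) ℤ).map (Int.cast : ℤ → ℝ)).mulVec v
          ∈ kaehlerConeXd d) ∧
      (!![1, d; 0, -1] : Matrix (Fin 2) (Fin 2) ℤ) * !![1, d; 0, -1] = 1 ∧
      (!![1, d; 0, -1] : Matrix (Fin 2) (Fin 2) ℤ) ≠ 1) := by
  have hD : (0:ℝ) < (d:ℝ) := by exact_mod_cast hpos
  have hDne : (d:ℝ) ≠ 0 := ne_of_gt hD
  have hD4 : ((d:ℝ)^2 + 4) ≠ 0 := by positivity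
  constructor
  · -- uniqueness
    intro M hdet hQ hcone
    obtain ⟨a, b, c, e, hM⟩ : ∃ a b c e, M = !![a, b; c, e] :=
      ⟨M 0 0, M 0 1, M 1 0, M 1 1, by ext i j; fin_cases i <;> fin_cases j <;> rfl⟩
    -- entry equations
    rw [hM] at hQ hdet
    have hT : (!![a,b;c,e] : Matrix (Fin 2) (Fin 2) ℤ)ᵀ = !![a,c;b,e] := by
      ext i j; fin_cases i <;> fin_cases j <;> rfl
    rw [hT] at hQ
    have h00 := congrFun (congrFun hQ 0) 0
    have h01 := congrFun (congrFun hQ 0) 1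
    have h11 := congrFun (congrFun hQ 1) 1
    simp [Matrix.mul_apply, Fin.sum_univ_two] at h00 h01 h11
    have h00r := congrArg (Int.cast : ℤ → ℝ) h00
    have h01r := congrArg (Int.cast : ℤ → ℝ) h01
    have h11r := congrArg (Int.cast : ℤ → ℝ) h11
    push_cast at h00r h01r h11r
    rw [Matrix.det_fin_two_of] at hdet
    have hdet' : a * e - b * c = 1 ∨ a * e - b * c = -1 := Int.isUnit_iff.mp hdet
    -- image computation
    have hmv : ∀ x y : ℝ, (M.map (Int.cast : ℤ → ℝ)).mulVec ![x,y]
        = ![(a:ℝ)*x + (b:ℝ)*y, (c:ℝ)*x + (e:ℝ)*y] := by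
      rw [hM]; intro x y; funext i
      fin_cases i <;> simp [Matrix.mulVec, dotProduct, Fin.sum_univ_two]
    have himg : ∀ x y : ℝ, ((d:ℝ)*x - 2*y > 0) → ((d:ℝ)*x + ((d:ℝ)^2+2)*y > 0) →
        0 < (d:ℝ)*((a:ℝ)*x + (b:ℝ)*y) - 2*((c:ℝ)*x + (e:ℝ)*y) ∧
        0 < (d:ℝ)*((a:ℝ)*x + (b:ℝ)*y) + ((d:ℝ)^2+2)*((c:ℝ)*x + (e:ℝ)*y) := by
      intro x y hx hy
      have hmem : (![x,y] : Fin 2 → ℝ) ∈ kaehlerConeXd d := by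
        simp only [kaehlerConeXd, Set.mem_setOf_eq, Matrix.cons_val_zero,
          Matrix.cons_val_one, Matrix.head_cons]
        exact ⟨hx, hy⟩
      have h3 := hcone _ hmem
      rw [hmv x y] at h3
      simp only [kaehlerConeXd, Set.mem_setOf_eq, Matrix.cons_val_zero,
        Matrix.cons_val_one, Matrix.head_cons] at h3
      exact ⟨h3.1, h3.2⟩
    -- the four boundary quantities
    have hF1nn : 0 ≤ (d:ℝ)*(2*(a:ℝ) + (d:ℝ)*(b:ℝ)) - 2*(2*(c:ℝ) + (d:ℝ)*(e:ℝ)) := by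
      apply nonneg_aux _ ((d:ℝ)*(a:ℝ) - 2*(c:ℝ))
      intro t ht
      have h := (himg (2+t) (d:ℝ) (by nlinarith [mul_pos hD ht])
        (by nlinarith [mul_pos hD ht, mul_pos (mul_pos hD hD) hD])).1
      nlinarith [h]
    have hG1nn : 0 ≤ (d:ℝ)*(2*(a:ℝ) + (d:ℝ)*(b:ℝ)) + ((d:ℝ)^2+2)*(2*(c:ℝ) + (d:ℝ)*(e:ℝ)) := by
      apply nonneg_aux _ ((d:ℝ)*(a:ℝ) + ((d:ℝ)^2+2)*(c:ℝ))
      intro t ht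
      have h := (himg (2+t) (d:ℝ) (by nlinarith [mul_pos hD ht])
        (by nlinarith [mul_pos hD ht, mul_pos (mul_pos hD hD) hD])).2
      nlinarith [h]
    have hF2nn : 0 ≤ (d:ℝ)*(((d:ℝ)^2+2)*(a:ℝ) - (d:ℝ)*(b:ℝ)) - 2*(((d:ℝ)^2+2)*(c:ℝ) - (d:ℝ)*(e:ℝ)) := by
      apply nonneg_aux _ ((d:ℝ)*(a:ℝ) - 2*(c:ℝ))
      intro t ht
      have h := (himg ((d:ℝ)^2+2+t) (-(d:ℝ)) (by nlinarith [mul_pos hD ht, mul_pos (mul_pos hD hD) hD])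
        (by nlinarith [mul_pos hD ht])).1
      nlinarith [h]
    have hG2nn : 0 ≤ (d:ℝ)*(((d:ℝ)^2+2)*(a:ℝ) - (d:ℝ)*(b:ℝ)) + ((d:ℝ)^2+2)*(((d:ℝ)^2+2)*(c:ℝ) - (d:ℝ)*(e:ℝ)) := by
      apply nonneg_aux _ ((d:ℝ)*(a:ℝ) + ((d:ℝ)^2+2)*(c:ℝ))
      intro t ht
      have h := (himg ((d:ℝ)^2+2+t) (-(d:ℝ)) (by nlinarith [mul_pos hD ht, mul_pos (mul_pos hD hD) hD])
        (by nlinarith [mul_pos hD ht])).2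
      nlinarith [h]
    -- quadratic relations
    have hm : (0:ℝ) < (d:ℝ)^2 + 2 := by positivity
    have hK : (0:ℝ) < (d:ℝ)*((d:ℝ)^2+4) := by positivity
    have hE1 : ((d:ℝ)*(2*(a:ℝ) + (d:ℝ)*(b:ℝ)) + ((d:ℝ)^2+2)*(2*(c:ℝ) + (d:ℝ)*(e:ℝ)))^2
        + ((d:ℝ)^2+2)*((d:ℝ)*(2*(a:ℝ) + (d:ℝ)*(b:ℝ)) + ((d:ℝ)^2+2)*(2*(c:ℝ) + (d:ℝ)*(e:ℝ)))*((d:ℝ)*(2*(a:ℝ) + (d:ℝ)*(b:ℝ)) - 2*(2*(c:ℝ) + (d:ℝ)*(e:ℝ)))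
        + ((d:ℝ)*(2*(a:ℝ) + (d:ℝ)*(b:ℝ)) - 2*(2*(c:ℝ) + (d:ℝ)*(e:ℝ)))^2
        = ((d:ℝ)*((d:ℝ)^2+4))^2 := by
      linear_combination (2*(d:ℝ)^2*((d:ℝ)^2+4)) * h00r + (2*(d:ℝ)^3*((d:ℝ)^2+4)) * h01r
        + ((d:ℝ)^4*((d:ℝ)^2+4)/2) * h11r
    have hE2 : ((d:ℝ)*(((d:ℝ)^2+2)*(a:ℝ) - (d:ℝ)*(b:ℝ)) + ((d:ℝ)^2+2)*(((d:ℝ)^2+2)*(c:ℝ) - (d:ℝ)*(e:ℝ)))^2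
        + ((d:ℝ)^2+2)*((d:ℝ)*(((d:ℝ)^2+2)*(a:ℝ) - (d:ℝ)*(b:ℝ)) + ((d:ℝ)^2+2)*(((d:ℝ)^2+2)*(c:ℝ) - (d:ℝ)*(e:ℝ)))*((d:ℝ)*(((d:ℝ)^2+2)*(a:ℝ) - (d:ℝ)*(b:ℝ)) - 2*(((d:ℝ)^2+2)*(c:ℝ) - (d:ℝ)*(e:ℝ)))
        + ((d:ℝ)*(((d:ℝ)^2+2)*(a:ℝ) - (d:ℝ)*(b:ℝ)) - 2*(((d:ℝ)^2+2)*(c:ℝ) - (d:ℝ)*(e:ℝ)))^2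
        = ((d:ℝ)*((d:ℝ)^2+4))^2 := by
      linear_combination ((d:ℝ)^2*((d:ℝ)^2+4)*((d:ℝ)^2+2)^2/2) * h00r
        - ((d:ℝ)^3*((d:ℝ)^2+4)*((d:ℝ)^2+2)) * h01r + ((d:ℝ)^4*((d:ℝ)^2+4)/2) * h11r
    have hE3 : 2*((d:ℝ)*(2*(a:ℝ) + (d:ℝ)*(b:ℝ)) + ((d:ℝ)^2+2)*(2*(c:ℝ) + (d:ℝ)*(e:ℝ)))*((d:ℝ)*(((d:ℝ)^2+2)*(a:ℝ) - (d:ℝ)*(b:ℝ)) + ((d:ℝ)^2+2)*(((d:ℝ)^2+2)*(c:ℝ) - (d:ℝ)*(e:ℝ)))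
        + ((d:ℝ)^2+2)*(((d:ℝ)*(2*(a:ℝ) + (d:ℝ)*(b:ℝ)) + ((d:ℝ)^2+2)*(2*(c:ℝ) + (d:ℝ)*(e:ℝ)))*((d:ℝ)*(((d:ℝ)^2+2)*(a:ℝ) - (d:ℝ)*(b:ℝ)) - 2*(((d:ℝ)^2+2)*(c:ℝ) - (d:ℝ)*(e:ℝ)))
          + ((d:ℝ)*(2*(a:ℝ) + (d:ℝ)*(b:ℝ)) - 2*(2*(c:ℝ) + (d:ℝ)*(e:ℝ)))*((d:ℝ)*(((d:ℝ)^2+2)*(a:ℝ) - (d:ℝ)*(b:ℝ)) + ((d:ℝ)^2+2)*(((d:ℝ)^2+2)*(c:ℝ) - (d:ℝ)*(e:ℝ))))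
        + 2*((d:ℝ)*(2*(a:ℝ) + (d:ℝ)*(b:ℝ)) - 2*(2*(c:ℝ) + (d:ℝ)*(e:ℝ)))*((d:ℝ)*(((d:ℝ)^2+2)*(a:ℝ) - (d:ℝ)*(b:ℝ)) - 2*(((d:ℝ)^2+2)*(c:ℝ) - (d:ℝ)*(e:ℝ)))
        = ((d:ℝ)^2+2)*((d:ℝ)*((d:ℝ)^2+4))^2 := by
      linear_combination (2*(d:ℝ)^2*((d:ℝ)^2+4)*((d:ℝ)^2+2)) * h00r
        + ((d:ℝ)^5*((d:ℝ)^2+4)) * h01r - ((d:ℝ)^4*((d:ℝ)^2+4)) * h11r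
    rcases hdet' with hdd | hdd
    · -- det = 1 : M = 1
      have hdetr : (a:ℝ)*(e:ℝ) - (b:ℝ)*(c:ℝ) = 1 := by exact_mod_cast hdd
      have hE4 : ((d:ℝ)*(2*(a:ℝ) + (d:ℝ)*(b:ℝ)) + ((d:ℝ)^2+2)*(2*(c:ℝ) + (d:ℝ)*(e:ℝ)))*((d:ℝ)*(((d:ℝ)^2+2)*(a:ℝ) - (d:ℝ)*(b:ℝ)) - 2*(((d:ℝ)^2+2)*(c:ℝ) - (d:ℝ)*(e:ℝ)))
          - ((d:ℝ)*(((d:ℝ)^2+2)*(a:ℝ) - (d:ℝ)*(b:ℝ)) + ((d:ℝ)^2+2)*(((d:ℝ)^2+2)*(c:ℝ) - (d:ℝ)*(e:ℝ)))*((d:ℝ)*(2*(a:ℝ) + (d:ℝ)*(b:ℝ)) - 2*(2*(c:ℝ) + (d:ℝ)*(e:ℝ)))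
          = ((d:ℝ)*((d:ℝ)^2+4))^2 := by
        linear_combination (((d:ℝ)*((d:ℝ)^2+4))^2) * hdetr
      obtain ⟨hF1z, hG1K, hF2K, hG2z⟩ :=
        cone_main _ _ _ _ _ _ hm hK hF1nn hG1nn hF2nn hG2nn hE1 hE2 hE3 hE4
      have s1 : 2*(c:ℝ) + (d:ℝ)*(e:ℝ) = (d:ℝ) := by
        have h : ((d:ℝ)^2+4)*(2*(c:ℝ) + (d:ℝ)*(e:ℝ) - (d:ℝ)) = 0 := by
          linear_combination hG1K - hF1z
        have := (mul_eq_zero.mp h).resolve_left hD4; linarith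
      have s2 : 2*(a:ℝ) + (d:ℝ)*(b:ℝ) = 2 := by
        have h : (d:ℝ)*(2*(a:ℝ) + (d:ℝ)*(b:ℝ) - 2) = 0 := by
          linear_combination hF1z + 2*s1
        have := (mul_eq_zero.mp h).resolve_left hDne; linarith
      have s3 : ((d:ℝ)^2+2)*(c:ℝ) - (d:ℝ)*(e:ℝ) = -(d:ℝ) := by
        have h : ((d:ℝ)^2+4)*(((d:ℝ)^2+2)*(c:ℝ) - (d:ℝ)*(e:ℝ) + (d:ℝ)) = 0 := by
          linear_combination hG2z - hF2K
        have := (mul_eq_zero.mp h).resolve_left hD4; linarith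
      have s4 : ((d:ℝ)^2+2)*(a:ℝ) - (d:ℝ)*(b:ℝ) = (d:ℝ)^2+2 := by
        have h : (d:ℝ)*(((d:ℝ)^2+2)*(a:ℝ) - (d:ℝ)*(b:ℝ) - ((d:ℝ)^2+2)) = 0 := by
          linear_combination hF2K + 2*s3
        have := (mul_eq_zero.mp h).resolve_left hDne; linarith
      have hra : (a:ℝ) = 1 := by
        have h : ((d:ℝ)^2+4)*((a:ℝ) - 1) = 0 := by linear_combination s2 + s4
        have := (mul_eq_zero.mp h).resolve_left hD4; linarith
      have hrb : (b:ℝ) = 0 := by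
        have h : (d:ℝ)*(b:ℝ) = 0 := by linear_combination s2 - 2*hra
        exact (mul_eq_zero.mp h).resolve_left hDne
      have hrc : (c:ℝ) = 0 := by
        have h : ((d:ℝ)^2+4)*(c:ℝ) = 0 := by linear_combination s1 + s3
        exact (mul_eq_zero.mp h).resolve_left hD4
      have hre : (e:ℝ) = 1 := by
        have h : (d:ℝ)*((e:ℝ) - 1) = 0 := by linear_combination s1 - 2*hrc
        have := (mul_eq_zero.mp h).resolve_left hDne; linarith
      have ha : a = 1 := by exact_mod_cast hra
      have hb : b = 0 := by exact_mod_cast hrb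
      have hc : c = 0 := by exact_mod_cast hrc
      have he : e = 1 := by exact_mod_cast hre
      left
      rw [hM, ha, hb, hc, he]
      exact (Matrix.one_fin_two).symm
    · -- det = -1 : M = !![1,d;0,-1]
      have hdetr : (a:ℝ)*(e:ℝ) - (b:ℝ)*(c:ℝ) = -1 := by exact_mod_cast hdd
      have hE1' : ((d:ℝ)*(2*(a:ℝ) + (d:ℝ)*(b:ℝ)) - 2*(2*(c:ℝ) + (d:ℝ)*(e:ℝ)))^2
          + ((d:ℝ)^2+2)*((d:ℝ)*(2*(a:ℝ) + (d:ℝ)*(b:ℝ)) - 2*(2*(c:ℝ) + (d:ℝ)*(e:ℝ)))*((d:ℝ)*(2*(a:ℝ) + (d:ℝ)*(b:ℝ)) + ((d:ℝ)^2+2)*(2*(c:ℝ) + (d:ℝ)*(e:ℝ)))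
          + ((d:ℝ)*(2*(a:ℝ) + (d:ℝ)*(b:ℝ)) + ((d:ℝ)^2+2)*(2*(c:ℝ) + (d:ℝ)*(e:ℝ)))^2
          = ((d:ℝ)*((d:ℝ)^2+4))^2 := by linear_combination hE1
      have hE2' : ((d:ℝ)*(((d:ℝ)^2+2)*(a:ℝ) - (d:ℝ)*(b:ℝ)) - 2*(((d:ℝ)^2+2)*(c:ℝ) - (d:ℝ)*(e:ℝ)))^2
          + ((d:ℝ)^2+2)*((d:ℝ)*(((d:ℝ)^2+2)*(a:ℝ) - (d:ℝ)*(b:ℝ)) - 2*(((d:ℝ)^2+2)*(c:ℝ) - (d:ℝ)*(e:ℝ)))*((d:ℝ)*(((d:ℝ)^2+2)*(a:ℝ) - (d:ℝ)*(b:ℝ)) + ((d:ℝ)^2+2)*(((d:ℝ)^2+2)*(c:ℝ) - (d:ℝ)*(e:ℝ)))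
          + ((d:ℝ)*(((d:ℝ)^2+2)*(a:ℝ) - (d:ℝ)*(b:ℝ)) + ((d:ℝ)^2+2)*(((d:ℝ)^2+2)*(c:ℝ) - (d:ℝ)*(e:ℝ)))^2
          = ((d:ℝ)*((d:ℝ)^2+4))^2 := by linear_combination hE2
      have hE3' : 2*((d:ℝ)*(2*(a:ℝ) + (d:ℝ)*(b:ℝ)) - 2*(2*(c:ℝ) + (d:ℝ)*(e:ℝ)))*((d:ℝ)*(((d:ℝ)^2+2)*(a:ℝ) - (d:ℝ)*(b:ℝ)) - 2*(((d:ℝ)^2+2)*(c:ℝ) - (d:ℝ)*(e:ℝ)))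
          + ((d:ℝ)^2+2)*(((d:ℝ)*(2*(a:ℝ) + (d:ℝ)*(b:ℝ)) - 2*(2*(c:ℝ) + (d:ℝ)*(e:ℝ)))*((d:ℝ)*(((d:ℝ)^2+2)*(a:ℝ) - (d:ℝ)*(b:ℝ)) + ((d:ℝ)^2+2)*(((d:ℝ)^2+2)*(c:ℝ) - (d:ℝ)*(e:ℝ)))
            + ((d:ℝ)*(2*(a:ℝ) + (d:ℝ)*(b:ℝ)) + ((d:ℝ)^2+2)*(2*(c:ℝ) + (d:ℝ)*(e:ℝ)))*((d:ℝ)*(((d:ℝ)^2+2)*(a:ℝ) - (d:ℝ)*(b:ℝ)) - 2*(((d:ℝ)^2+2)*(c:ℝ) - (d:ℝ)*(e:ℝ))))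
          + 2*((d:ℝ)*(2*(a:ℝ) + (d:ℝ)*(b:ℝ)) + ((d:ℝ)^2+2)*(2*(c:ℝ) + (d:ℝ)*(e:ℝ)))*((d:ℝ)*(((d:ℝ)^2+2)*(a:ℝ) - (d:ℝ)*(b:ℝ)) + ((d:ℝ)^2+2)*(((d:ℝ)^2+2)*(c:ℝ) - (d:ℝ)*(e:ℝ)))
          = ((d:ℝ)^2+2)*((d:ℝ)*((d:ℝ)^2+4))^2 := by linear_combination hE3
      have hE4' : ((d:ℝ)*(2*(a:ℝ) + (d:ℝ)*(b:ℝ)) - 2*(2*(c:ℝ) + (d:ℝ)*(e:ℝ)))*((d:ℝ)*(((d:ℝ)^2+2)*(a:ℝ) - (d:ℝ)*(b:ℝ)) + ((d:ℝ)^2+2)*(((d:ℝ)^2+2)*(c:ℝ) - (d:ℝ)*(e:ℝ)))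
          - ((d:ℝ)*(((d:ℝ)^2+2)*(a:ℝ) - (d:ℝ)*(b:ℝ)) - 2*(((d:ℝ)^2+2)*(c:ℝ) - (d:ℝ)*(e:ℝ)))*((d:ℝ)*(2*(a:ℝ) + (d:ℝ)*(b:ℝ)) + ((d:ℝ)^2+2)*(2*(c:ℝ) + (d:ℝ)*(e:ℝ)))
          = ((d:ℝ)*((d:ℝ)^2+4))^2 := by
        linear_combination (-((d:ℝ)*((d:ℝ)^2+4))^2) * hdetr
      obtain ⟨hG1z, hF1K, hG2K, hF2z⟩ :=
        cone_main _ _ _ _ _ _ hm hK hG1nn hF1nn hG2nn hF2nn hE1' hE2' hE3' hE4'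
      have s1 : 2*(c:ℝ) + (d:ℝ)*(e:ℝ) = -(d:ℝ) := by
        have h : ((d:ℝ)^2+4)*(2*(c:ℝ) + (d:ℝ)*(e:ℝ) + (d:ℝ)) = 0 := by
          linear_combination hG1z - hF1K
        have := (mul_eq_zero.mp h).resolve_left hD4; linarith
      have s2 : 2*(a:ℝ) + (d:ℝ)*(b:ℝ) = (d:ℝ)^2+2 := by
        have h : (d:ℝ)*(2*(a:ℝ) + (d:ℝ)*(b:ℝ) - ((d:ℝ)^2+2)) = 0 := by
          linear_combination hF1K + 2*s1
        have := (mul_eq_zero.mp h).resolve_left hDne; linarith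
      have s3 : ((d:ℝ)^2+2)*(c:ℝ) - (d:ℝ)*(e:ℝ) = (d:ℝ) := by
        have h : ((d:ℝ)^2+4)*(((d:ℝ)^2+2)*(c:ℝ) - (d:ℝ)*(e:ℝ) - (d:ℝ)) = 0 := by
          linear_combination hG2K - hF2z
        have := (mul_eq_zero.mp h).resolve_left hD4; linarith
      have s4 : ((d:ℝ)^2+2)*(a:ℝ) - (d:ℝ)*(b:ℝ) = 2 := by
        have h : (d:ℝ)*(((d:ℝ)^2+2)*(a:ℝ) - (d:ℝ)*(b:ℝ) - 2) = 0 := by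
          linear_combination hF2z + 2*s3
        have := (mul_eq_zero.mp h).resolve_left hDne; linarith
      have hra : (a:ℝ) = 1 := by
        have h : ((d:ℝ)^2+4)*((a:ℝ) - 1) = 0 := by linear_combination s2 + s4
        have := (mul_eq_zero.mp h).resolve_left hD4; linarith
      have hrb : (b:ℝ) = (d:ℝ) := by
        have h : (d:ℝ)*((b:ℝ) - (d:ℝ)) = 0 := by linear_combination s2 - 2*hra
        have := (mul_eq_zero.mp h).resolve_left hDne; linarith
      have hrc : (c:ℝ) = 0 := by
        have h : ((d:ℝ)^2+4)*(c:ℝ) = 0 := by linear_combination s1 + s3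
        exact (mul_eq_zero.mp h).resolve_left hD4
      have hre : (e:ℝ) = -1 := by
        have h : (d:ℝ)*((e:ℝ) + 1) = 0 := by linear_combination s1 - 2*hrc
        have := (mul_eq_zero.mp h).resolve_left hDne; linarith
      have ha : a = 1 := by exact_mod_cast hra
      have hb : b = d := by exact_mod_cast hrb
      have hc : c = 0 := by exact_mod_cast hrc
      have he : e = -1 := by exact_mod_cast hre
      right
      rw [hM, ha, hb, hc, he]
  · refine ⟨?_, ?_, ?_, ?_, ?_⟩
    · have h : (!![1, d; 0, -1] : Matrix (Fin 2) (Fin 2) ℤ).det = -1 := by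
        simp [Matrix.det_fin_two_of]
      rw [h]; exact isUnit_one.neg
    · have hT : (!![(1:ℤ), d; 0, -1])ᵀ = !![1, 0; d, -1] := by
        ext i j; fin_cases i <;> fin_cases j <;> rfl
      rw [hT]
      ext i j
      fin_cases i <;> fin_cases j <;>
        simp [Matrix.mul_apply, Fin.sum_univ_two] <;> ring
    · intro v hv
      obtain ⟨hv1, hv2⟩ := hv
      have hmv : ((!![1, d; 0, -1] : Matrix (Fin 2) (Fin 2) ℤ).map (Int.cast : ℤ → ℝ)).mulVec v
          = ![v 0 + (d:ℝ) * v 1, -(v 1)] := by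
        funext i
        fin_cases i <;> simp [Matrix.mulVec, dotProduct, Fin.sum_univ_two]
      rw [hmv]
      constructor
      · show (d:ℝ) * (![v 0 + (d:ℝ) * v 1, -(v 1)] 0) - 2 * (![v 0 + (d:ℝ) * v 1, -(v 1)] 1) > 0
        simp only [Matrix.cons_val_zero, Matrix.cons_val_one, Matrix.head_cons]
        nlinarith [hv2]
      · show (d:ℝ) * (![v 0 + (d:ℝ) * v 1, -(v 1)] 0) + ((d:ℝ)^2 + 2) * (![v 0 + (d:ℝ) * v 1, -(v 1)] 1) > 0
        simp only [Matrix.cons_val_zero, Matrix.cons_val_one, Matrix.head_cons]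
        nlinarith [hv1]
    · ext i j
      fin_cases i <;> fin_cases j <;>
        simp [Matrix.mul_apply, Fin.sum_univ_two, Matrix.one_apply] <;> ring
    · intro h
      have := congrFun (congrFun h 1) 1
      simp [Matrix.one_apply] at this
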